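/- Let d ≥ 1, let R > 0, x₀ ∈ ℝ^d, and let s, ŝ : ℝ^d → ℝ^d be continuous vector fields. Suppose there exist δ > 0 and m > 0 such that for every y ∈ ∂B_R(x₀): ‖s(y) − ŝ(y)‖ < δ, ‖s(y)‖ > m, ‖ŝ(y)‖ > m, and ‖t·s(y) + (1−t)·ŝ(y)‖ ≥ m for every t ∈ [0,1]. Then for p = 1, |Δ̄_1 s(x₀) − Δ̄_1 ŝ(x₀)| ≤ (σ(∂B_R(x₀)) / vol(B_R(x₀))) · 2δ/m. -/

import Mathlib

/-!
Since `‖a / ‖a‖ - b / ‖b‖‖ ≤ 2 ‖a - b‖ / ‖a‖` and the outward normal `(y - x₀) / R` is a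
unit vector on the sphere, the two integrands differ pointwise by at most `2δ / m`; integrating
over the sphere gives the bound once its `(d - 1)`-dimensional Hausdorff measure is known to be
finite. For that, the unit sphere is covered by finitely many caps `{u | 1/2 < ⟪u, v⟫}`, each the
image of a ball of the hyperplane `(ℝ ∙ v)ᗮ` under the Lipschitz map `z ↦ (v + z) / ‖v + z‖`.
-/

open MeasureTheory Metric Module
open scoped InnerProductSpace

/-- Boundary-formulation average 1-Laplace of a vector field `s` at `x₀` with radius `R`:
`(1 / vol(B_R x₀)) ∫_{∂B_R x₀} ⟪s y / ‖s y‖, (y - x₀)/R⟫ dσ(y)`,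
where `σ` is the `(d-1)`-dimensional Hausdorff measure. -/
noncomputable def avg1Laplace (d : ℕ)
    (s : EuclideanSpace ℝ (Fin d) → EuclideanSpace ℝ (Fin d))
    (x₀ : EuclideanSpace ℝ (Fin d)) (R : ℝ) : ℝ :=
  (volume (ball x₀ R)).toReal⁻¹ *
    ∫ y in sphere x₀ R, ⟪‖s y‖⁻¹ • s y, R⁻¹ • (y - x₀)⟫_ℝ ∂(μH[(d : ℝ) - 1])

namespace NormedSpace

variable {V : Type*} [NormedAddCommGroup V] [NormedSpace ℝ V]

theorem norm_normalize_le (x : V) : ‖normalize x‖ ≤ 1 := by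
  by_cases hx : x = 0
  · simp [hx]
  · exact (norm_normalize hx).le

theorem norm_normalize_sub_normalize_le {a : V} (b : V) (ha : a ≠ 0) :
    ‖normalize a - normalize b‖ ≤ 2 * ‖a - b‖ / ‖a‖ := by
  have ha' : 0 < ‖a‖ := norm_pos_iff.2 ha
  have hsplit : normalize a - normalize b = ‖a‖⁻¹ • (a - b) + (‖a‖⁻¹ - ‖b‖⁻¹) • b := by
    simp only [normalize, smul_sub, sub_smul]; abel
  have hlength : ‖(‖a‖⁻¹ - ‖b‖⁻¹) • b‖ ≤ ‖a - b‖ / ‖a‖ := by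
    rcases eq_or_ne b 0 with rfl | hb
    · simp [div_nonneg]
    have hb' : 0 < ‖b‖ := norm_pos_iff.2 hb
    calc ‖(‖a‖⁻¹ - ‖b‖⁻¹) • b‖ = |‖b‖ - ‖a‖| / ‖a‖ := by
          rw [norm_smul, Real.norm_eq_abs, inv_sub_inv ha'.ne' hb'.ne', abs_div,
            abs_of_pos (mul_pos ha' hb')]
          field_simp
      _ ≤ ‖a - b‖ / ‖a‖ := by
          gcongr; rw [norm_sub_rev]; exact abs_norm_sub_norm_le b a
  calc ‖normalize a - normalize b‖
      ≤ ‖‖a‖⁻¹ • (a - b)‖ + ‖(‖a‖⁻¹ - ‖b‖⁻¹) • b‖ := hsplit ▸ norm_add_le _ _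
    _ ≤ ‖a - b‖ / ‖a‖ + ‖a - b‖ / ‖a‖ := by
        gcongr
        rw [norm_smul, norm_inv, norm_norm, inv_mul_eq_div]
    _ = 2 * ‖a - b‖ / ‖a‖ := by ring

theorem lipschitzOnWith_normalize : LipschitzOnWith 2 (normalize : V → V) {x | 1 ≤ ‖x‖} := by
  refine LipschitzOnWith.of_dist_le_mul fun a ha b _ => ?_
  rw [dist_eq_norm, dist_eq_norm]
  have ha0 : a ≠ 0 := norm_pos_iff.1 (one_pos.trans_le ha)
  calc ‖normalize a - normalize b‖ ≤ 2 * ‖a - b‖ / ‖a‖ := norm_normalize_sub_normalize_le b ha0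
    _ ≤ 2 * ‖a - b‖ / 1 := by gcongr; exact ha
    _ = 2 * ‖a - b‖ := div_one _

theorem _root_.MeasureTheory.StronglyMeasurable.normalize {α : Type*} [MeasurableSpace α]
    {f : α → V} (hf : StronglyMeasurable f) : StronglyMeasurable fun x => normalize (f x) :=
  hf.norm.measurable.inv.stronglyMeasurable.smul hf

end NormedSpace

section Sphere

variable {E : Type*} [NormedAddCommGroup E] [InnerProductSpace ℝ E]

theorem norm_inv_smul_sub_eq_one {x y : E} {R : ℝ} (hR : 0 < R) (hy : y ∈ sphere x R) :
    ‖R⁻¹ • (y - x)‖ = 1 := by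
  rw [norm_smul, norm_inv, Real.norm_of_nonneg hR.le, ← dist_eq_norm, mem_sphere.1 hy,
    inv_mul_cancel₀ hR.ne']

theorem sphere_inter_cap_subset_image_normalize {v : E} (hv : ‖v‖ = 1) :
    sphere 0 1 ∩ {u | 1 / 2 < ⟪u, v⟫_ℝ} ⊆
      (fun z : (ℝ ∙ v)ᗮ => NormedSpace.normalize (v + z)) '' closedBall 0 3 := by
  rintro u ⟨hu, hcap : 1 / 2 < ⟪u, v⟫_ℝ⟩
  rw [mem_sphere_zero_iff_norm] at hu
  set a := ⟪u, v⟫_ℝ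
  have ha : 0 < a := by linarith
  have hz : a⁻¹ • u - v ∈ (ℝ ∙ v)ᗮ := by
    rw [Submodule.mem_orthogonal_singleton_iff_inner_right, inner_sub_right, inner_smul_right,
      real_inner_comm, real_inner_self_eq_norm_sq, hv]
    field_simp; ring
  refine ⟨⟨_, hz⟩, ?_, ?_⟩
  · rw [mem_closedBall_zero_iff, Submodule.coe_norm]
    have ha_inv : a⁻¹ ≤ 2 := by rw [inv_le_comm₀ ha two_pos]; linarith
    calc ‖a⁻¹ • u - v‖ ≤ ‖a⁻¹ • u‖ + ‖v‖ := norm_sub_le _ _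
      _ = a⁻¹ + 1 := by rw [norm_smul, Real.norm_eq_abs, abs_inv, abs_of_pos ha, hu, hv, mul_one]
      _ ≤ 3 := by linarith
  · simp only [add_sub_cancel, NormedSpace.normalize_smul_of_pos (inv_pos.2 ha),
      NormedSpace.normalize_eq_self_of_norm_eq_one hu]

variable [FiniteDimensional ℝ E] [MeasurableSpace E] [BorelSpace E]

theorem hausdorffMeasure_image_normalize_orthogonal_lt_top {n : ℕ} (hn : finrank ℝ E = n + 1)
    {v : E} (hv : ‖v‖ = 1) (r : ℝ) :
    μH[n] ((fun z : (ℝ ∙ v)ᗮ => NormedSpace.normalize (v + z)) '' closedBall 0 r) < ⊤ := by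
  have : Fact (finrank ℝ E = n + 1) := ⟨hn⟩
  have hfinrank : finrank ℝ (ℝ ∙ v)ᗮ = n :=
    Submodule.finrank_orthogonal_span_singleton (norm_ne_zero_iff.1 (by simp [hv]))
  have hmaps : Set.MapsTo (fun z : (ℝ ∙ v)ᗮ => v + (z : E)) (closedBall 0 r) {x | 1 ≤ ‖x‖} := by
    intro z _
    have hvz : ⟪v + z, v⟫_ℝ = 1 := by
      rw [inner_add_left, real_inner_self_eq_norm_sq, hv,
        Submodule.inner_left_of_mem_orthogonal (Submodule.mem_span_singleton_self v) z.2]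
      norm_num
    simpa [hvz, hv] using real_inner_le_norm (v + (z : E)) v
  have hlip : LipschitzOnWith (2 * 1) (fun z : (ℝ ∙ v)ᗮ => NormedSpace.normalize (v + z))
      (closedBall 0 r) :=
    NormedSpace.lipschitzOnWith_normalize.comp
      ((isometry_add_left v).comp isometry_subtype_coe).lipschitz.lipschitzOnWith hmaps
  have hball : μH[n] (closedBall (0 : (ℝ ∙ v)ᗮ) r) < ⊤ := by
    rw [← hfinrank]; exact (isCompact_closedBall _ _).measure_lt_top
  exact (hlip.hausdorffMeasure_image_le n.cast_nonneg).trans_lt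
    (ENNReal.mul_lt_top (by finiteness) hball)

theorem hausdorffMeasure_unitSphere_lt_top {n : ℕ} (hn : finrank ℝ E = n + 1) :
    μH[n] (sphere (0 : E) 1) < ⊤ := by
  obtain ⟨t, ht, hcover⟩ := (isCompact_sphere (0 : E) 1).elim_nhds_subcover
    (fun v => {u | 1 / 2 < ⟪u, v⟫_ℝ}) fun v hv => by
      refine (isOpen_lt continuous_const (continuous_id.inner continuous_const)).mem_nhds ?_
      rw [mem_sphere_zero_iff_norm] at hv
      norm_num [hv]
  have hcaps : sphere (0 : E) 1 ⊆ ⋃ v ∈ t,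
      (fun z : (ℝ ∙ v)ᗮ => NormedSpace.normalize (v + z)) '' closedBall 0 3 := by
    intro u hu
    obtain ⟨v, hvt, huv⟩ := Set.mem_iUnion₂.1 (hcover hu)
    exact Set.mem_iUnion₂.2 ⟨v, hvt,
      sphere_inter_cap_subset_image_normalize (mem_sphere_zero_iff_norm.1 (ht v hvt)) ⟨hu, huv⟩⟩
  refine (measure_mono hcaps).trans_lt ((measure_biUnion_finset_le _ _).trans_lt ?_)
  exact ENNReal.sum_lt_top.2 fun v hv =>
    hausdorffMeasure_image_normalize_orthogonal_lt_top hn (mem_sphere_zero_iff_norm.1 (ht v hv)) 3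

theorem hausdorffMeasure_sphere_lt_top {n : ℕ} (hn : finrank ℝ E = n + 1) (x : E) {R : ℝ}
    (hR : 0 < R) : μH[n] (sphere x R) < ⊤ := by
  have hsub : sphere x R ⊆ (fun y => x + R • y) '' sphere 0 1 := fun y hy =>
    ⟨R⁻¹ • (y - x), mem_sphere_zero_iff_norm.2 (norm_inv_smul_sub_eq_one hR hy), by
      simp [smul_smul, mul_inv_cancel₀ hR.ne']⟩
  have hlip : LipschitzWith (1 * ‖R‖₊) fun y : E => x + R • y :=
    (isometry_add_left x).lipschitz.comp (lipschitzWith_smul R)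
  exact (measure_mono hsub).trans_lt ((hlip.hausdorffMeasure_image_le n.cast_nonneg _).trans_lt
    (ENNReal.mul_lt_top (by finiteness) (hausdorffMeasure_unitSphere_lt_top hn)))

end Sphere

section Flux

variable {α E : Type*} [MeasurableSpace α] [NormedAddCommGroup E] [InnerProductSpace ℝ E]
  {μ : Measure α} {S : Set α} {s t ν : α → E}

theorem integrableOn_inner_normalize (hS : μ S < ⊤) (hSm : MeasurableSet S)
    (hs : StronglyMeasurable s) (hν : StronglyMeasurable ν) (hν1 : ∀ y ∈ S, ‖ν y‖ ≤ 1) :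
    IntegrableOn (fun y => ⟪NormedSpace.normalize (s y), ν y⟫_ℝ) S μ := by
  refine IntegrableOn.of_bound hS (hs.normalize.inner hν).aestronglyMeasurable 1
    (ae_restrict_of_forall_mem hSm fun y hy => ?_)
  calc ‖⟪NormedSpace.normalize (s y), ν y⟫_ℝ‖ ≤ ‖NormedSpace.normalize (s y)‖ * ‖ν y‖ :=
        norm_inner_le_norm _ _
    _ ≤ 1 * 1 := by gcongr; exacts [NormedSpace.norm_normalize_le _, hν1 y hy]
    _ = 1 := one_mul 1

theorem abs_setIntegral_inner_normalize_sub_le (hS : μ S < ⊤) (hSm : MeasurableSet S)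
    (hs : StronglyMeasurable s) (ht : StronglyMeasurable t) (hν : StronglyMeasurable ν)
    (hν1 : ∀ y ∈ S, ‖ν y‖ ≤ 1) {δ m : ℝ} (hm : 0 < m) (hδ : ∀ y ∈ S, ‖s y - t y‖ ≤ δ)
    (hsm : ∀ y ∈ S, m ≤ ‖s y‖) :
    |∫ y in S, ⟪NormedSpace.normalize (s y), ν y⟫_ℝ ∂μ -
        ∫ y in S, ⟪NormedSpace.normalize (t y), ν y⟫_ℝ ∂μ| ≤ 2 * δ / m * μ.real S := by
  rw [← integral_sub (integrableOn_inner_normalize hS hSm hs hν hν1)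
    (integrableOn_inner_normalize hS hSm ht hν hν1), ← Real.norm_eq_abs]
  refine norm_setIntegral_le_of_norm_le_const hS fun y hy => ?_
  have hsy : s y ≠ 0 := norm_pos_iff.1 (hm.trans_le (hsm y hy))
  have hδ0 : 0 ≤ δ := (norm_nonneg _).trans (hδ y hy)
  calc ‖⟪NormedSpace.normalize (s y), ν y⟫_ℝ - ⟪NormedSpace.normalize (t y), ν y⟫_ℝ‖
      = ‖⟪NormedSpace.normalize (s y) - NormedSpace.normalize (t y), ν y⟫_ℝ‖ := by
        rw [inner_sub_left]
    _ ≤ ‖NormedSpace.normalize (s y) - NormedSpace.normalize (t y)‖ * 1 :=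
        (norm_inner_le_norm _ _).trans (by gcongr; exact hν1 y hy)
    _ ≤ 2 * ‖s y - t y‖ / ‖s y‖ * 1 := by
        gcongr; exact NormedSpace.norm_normalize_sub_normalize_le _ hsy
    _ ≤ 2 * δ / m := by
        rw [mul_one]; gcongr; exacts [hδ y hy, hsm y hy]

end Flux

theorem avg1Laplace_error_bound_general (d : ℕ) (hd : 1 ≤ d)
    (R : ℝ) (hR : 0 < R) (x₀ : EuclideanSpace ℝ (Fin d))
    (s sHat : EuclideanSpace ℝ (Fin d) → EuclideanSpace ℝ (Fin d))
    (hs : Continuous s) (hsHat : Continuous sHat)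
    (δ m : ℝ) (hm : 0 < m)
    (ha : ∀ y ∈ sphere x₀ R, ‖s y - sHat y‖ < δ)
    (hb : ∀ y ∈ sphere x₀ R, m < ‖s y‖ ∧ m < ‖sHat y‖) :
    |avg1Laplace d s x₀ R - avg1Laplace d sHat x₀ R| ≤
      ((μH[(d : ℝ) - 1] (sphere x₀ R)).toReal / (volume (ball x₀ R)).toReal) *
        (2 * δ / m) := by
  obtain ⟨n, rfl⟩ : ∃ n, d = n + 1 := ⟨d - 1, by omega⟩
  have hdim : ((n + 1 : ℕ) : ℝ) - 1 = n := by push_cast; ring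
  have hfin : μH[((n + 1 : ℕ) : ℝ) - 1] (sphere x₀ R) < ⊤ :=
    hdim ▸ hausdorffMeasure_sphere_lt_top finrank_euclideanSpace_fin x₀ hR
  have hν : Continuous fun y => R⁻¹ • (y - x₀) := by fun_prop
  have hflux := abs_setIntegral_inner_normalize_sub_le hfin isClosed_sphere.measurableSet
    hs.stronglyMeasurable hsHat.stronglyMeasurable hν.stronglyMeasurable
    (fun y hy => (norm_inv_smul_sub_eq_one hR hy).le) hm (fun y hy => (ha y hy).le)
    (fun y hy => (hb y hy).1.le)
  rw [avg1Laplace, avg1Laplace, ← mul_sub, abs_mul,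
    abs_of_nonneg (inv_nonneg.2 ENNReal.toReal_nonneg)]
  calc _ ≤ (volume (ball x₀ R)).toReal⁻¹ *
        (2 * δ / m * (μH[((n + 1 : ℕ) : ℝ) - 1] (sphere x₀ R)).toReal) := by
        gcongr; exact hflux
    _ = _ := by ring

/-- error bound for the boundary-formulation average 1-Laplace. -/
theorem avg1Laplace_error_bound (d : ℕ) (hd : 1 ≤ d)
    (R : ℝ) (hR : 0 < R) (x₀ : EuclideanSpace ℝ (Fin d))
    (s sHat : EuclideanSpace ℝ (Fin d) → EuclideanSpace ℝ (Fin d))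
    (hs : Continuous s) (hsHat : Continuous sHat)
    (δ m : ℝ) (hδ : 0 < δ) (hm : 0 < m)
    (ha : ∀ y ∈ sphere x₀ R, ‖s y - sHat y‖ < δ)
    (hb : ∀ y ∈ sphere x₀ R, m < ‖s y‖ ∧ m < ‖sHat y‖)
    (hc : ∀ y ∈ sphere x₀ R, ∀ t ∈ Set.Icc (0 : ℝ) 1, m ≤ ‖t • s y + (1 - t) • sHat y‖) :
    |avg1Laplace d s x₀ R - avg1Laplace d sHat x₀ R| ≤
      ((μH[(d : ℝ) - 1] (sphere x₀ R)).toReal / (volume (ball x₀ R)).toReal) *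
        (2 * δ / m) :=
  avg1Laplace_error_bound_general d hd R hR x₀ s sHat hs hsHat δ m hm ha hb
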